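/- arXiv:1106.2331 — 2 statements merged into one kernel-verified Lean document; each statement's English description precedes it below -/
import Mathlib

section
/- Let Γ be a finite simple graph with vertex set X. For all distinct x, z ∈ X and all U ⊆ X: (i) cl({x}) = 𝔞(x) ∩ x^⊥, so 𝔞(x) = cl({x}) if and only if 𝔞(x) ⊆ x^⊥; (ii) x^⊥ ⊆ 𝔞(x) if and only if x^⊥ spans a complete subgraph of Γ; (iii) 𝔞(z) ⊆ 𝔞(x) if and only if x^⊥ \ {x} ⊆ z^⊥; (iv) 𝔞(x) = 𝔞(z) if and only if x^⊥ = z^⊥ or x^⊥ \ {x} = z^⊥ \ {z}; (v) if z ∈ 𝔞(x) then 𝔞(z) ⊆ 𝔞(x); (vi) 𝔞(U) = ⋃_{y ∈ 𝔞(U)} 𝔞(y); (vii) if cl({x}) = 𝔞(x) then cl({y}) = 𝔞(y) for all y ∈ 𝔞(x). -/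
namespace PCG

variable {X : Type*}

/-- The orthogonal complement of a set of vertices: all vertices at distance at
most one from every element of `Y`. -/
def perp (Γ : SimpleGraph X) (Y : Set X) : Set X :=
  {u | ∀ y ∈ Y, u = y ∨ Γ.Adj u y}

/-- The closure operator `cl(Y) = Y^⊥⊥`. -/
def cl (Γ : SimpleGraph X) (Y : Set X) : Set X :=
  perp Γ (perp Γ Y)

/-- The admissible-set operator `𝔞(Y) = ⋂_{y ∈ Y} (y^⊥ \ {y})^⊥` (with `𝔞(∅) = X`). -/
def aSet (Γ : SimpleGraph X) (Y : Set X) : Set X :=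
  ⋂ y ∈ Y, perp Γ (perp Γ {y} \ {y})

/-- A set is admissible if it is `𝔞(Y)` for some `Y`. -/
def IsAdmissible (Γ : SimpleGraph X) (A : Set X) : Prop :=
  ∃ Y : Set X, A = aSet Γ Y

/-- A set is closed if it equals its closure. -/
def IsClosedSet (Γ : SimpleGraph X) (Y : Set X) : Prop :=
  Y = cl Γ Y

/-- `x` dominates `y` if `x^⊥ ∩ y^⊥ = y^⊥ \ {y}`. -/
def Dominates (Γ : SimpleGraph X) (x y : X) : Prop :=
  perp Γ {x} ∩ perp Γ {y} = perp Γ {y} \ {y}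

/-- The set of dominated vertices. -/
def Dom (Γ : SimpleGraph X) : Set X :=
  {y | ∃ x, Dominates Γ x y}

/-- The `∼⊥`-equivalence class of `x`: vertices with the same star as `x`. -/
def perpClass (Γ : SimpleGraph X) (x : X) : Set X :=
  {y | perp Γ {y} = perp Γ {x}}

/-- The `∼◇`-equivalence class of `x`: vertices with the same link as `x`. -/
def diaClass (Γ : SimpleGraph X) (x : X) : Set X :=
  {y | perp Γ {y} \ {y} = perp Γ {x} \ {x}}

/-- The `∼`-equivalence class `[x]`. -/
def simClass (Γ : SimpleGraph X) (x : X) : Set X :=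
  perpClass Γ x ∪ diaClass Γ x

/-- The outer admissible set of `y`. -/
def out (Γ : SimpleGraph X) (y : X) : Set X :=
  {x | Dominates Γ x y ∧ simClass Γ x ≠ simClass Γ y}

/-- `C` is the vertex set of a connected component of the full subgraph of `Γ` on `S`. -/
def IsCompOf (Γ : SimpleGraph X) (S : Set X) (C : Set X) : Prop :=
  ∃ K : (Γ.induce S).ConnectedComponent, C = Subtype.val '' K.supp

/-- Balanced graphs. -/
def Balanced (Γ : SimpleGraph X) : Prop :=
  ∀ v ∈ Dom Γ, out Γ v = ∅ ∨ ∃ C : Set X, IsCompOf Γ ((perp Γ {v})ᶜ) C ∧ out Γ v ⊆ C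

/-- Relators of the partially commutative group: commutators of adjacent vertices. -/
def raagRels (Γ : SimpleGraph X) : Set (FreeGroup X) :=
  {w | ∃ x y : X, Γ.Adj x y ∧
    w = FreeGroup.of x * FreeGroup.of y * (FreeGroup.of x)⁻¹ * (FreeGroup.of y)⁻¹}

/-- The partially commutative group (right-angled Artin group) of `Γ`. -/
abbrev RAAG (Γ : SimpleGraph X) : Type _ := PresentedGroup (raagRels Γ)

/-- The generator of `RAAG Γ` corresponding to a vertex. -/
def gen (Γ : SimpleGraph X) (x : X) : RAAG Γ := PresentedGroup.of x

/-- The canonical parabolic subgroup generated by a set of vertices. -/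
def parab (Γ : SimpleGraph X) (Y : Set X) : Subgroup (RAAG Γ) :=
  Subgroup.closure (gen Γ '' Y)

/-- Conjugate of a subgroup: `H^f = f⁻¹ H f`. -/
def conjBy {G : Type*} [Group G] (H : Subgroup G) (f : G) : Subgroup G :=
  Subgroup.map (MulAut.conj f⁻¹).toMonoidHom H

/-- Inversions. -/
def InvSet (Γ : SimpleGraph X) : Set (MulAut (RAAG Γ)) :=
  {φ | ∃ x : X, φ (gen Γ x) = (gen Γ x)⁻¹ ∧ ∀ y : X, y ≠ x → φ (gen Γ y) = gen Γ y}

/-- Transvections. -/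
def TrSet (Γ : SimpleGraph X) : Set (MulAut (RAAG Γ)) :=
  {φ | ∃ x y : X, y ≠ x ∧
    (φ (gen Γ x) = gen Γ x * gen Γ y ∨ φ (gen Γ x) = (gen Γ y)⁻¹ * gen Γ x) ∧
    ∀ z : X, z ≠ x → φ (gen Γ z) = gen Γ z}

/-- Elementary conjugating automorphisms. -/
def LInnSet (Γ : SimpleGraph X) : Set (MulAut (RAAG Γ)) :=
  {φ | ∃ (x : X) (C : Set X) (ε : ℤ), (ε = 1 ∨ ε = -1) ∧
    IsCompOf Γ ((perp Γ {x})ᶜ) C ∧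
    (∀ u ∈ C, φ (gen Γ u) = (gen Γ x ^ ε)⁻¹ * gen Γ u * gen Γ x ^ ε) ∧
    (∀ u : X, u ∉ C → φ (gen Γ u) = gen Γ u)}

/-- The subgroup `Aut*(G)` generated by inversions, transvections and elementary
conjugating automorphisms. -/
def AutStar (Γ : SimpleGraph X) : Subgroup (MulAut (RAAG Γ)) :=
  Subgroup.closure (InvSet Γ ∪ TrSet Γ ∪ LInnSet Γ)

/-- Basis-conjugating automorphisms. -/
def IsBasisConj (Γ : SimpleGraph X) (φ : MulAut (RAAG Γ)) : Prop :=
  ∀ x : X, ∃ g : RAAG Γ, φ (gen Γ x) = g⁻¹ * gen Γ x * g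

/-- Normal conjugating automorphisms. -/
def IsConjN (Γ : SimpleGraph X) (φ : MulAut (RAAG Γ)) : Prop :=
  IsBasisConj Γ φ ∧
    ∀ x : X, ∃ f : RAAG Γ, ∀ z ∈ aSet Γ {x}, φ (gen Γ z) = f⁻¹ * gen Γ z * f

/-- Vertex conjugating automorphisms. -/
def IsConjV (Γ : SimpleGraph X) (φ : MulAut (RAAG Γ)) : Prop :=
  IsBasisConj Γ φ ∧
    ∀ x : X, ∃ f : RAAG Γ, ∀ y ∈ simClass Γ x, φ (gen Γ y) = f⁻¹ * gen Γ y * f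

/-- Membership in `St(K)`. -/
def IsStK (Γ : SimpleGraph X) (φ : MulAut (RAAG Γ)) : Prop :=
  ∀ A : Set X, IsAdmissible Γ A →
    Subgroup.map φ.toMonoidHom (parab Γ A) = parab Γ A

/-- Membership in `St(L)`. -/
def IsStL (Γ : SimpleGraph X) (φ : MulAut (RAAG Γ)) : Prop :=
  ∀ A : Set X, IsClosedSet Γ A →
    Subgroup.map φ.toMonoidHom (parab Γ A) = parab Γ A

/-- Membership in `St^conj(K)`. -/
def IsStConjK (Γ : SimpleGraph X) (φ : MulAut (RAAG Γ)) : Prop :=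
  ∀ A : Set X, IsAdmissible Γ A →
    ∃ f : RAAG Γ, Subgroup.map φ.toMonoidHom (parab Γ A) = conjBy (parab Γ A) f

/-- Aggregate conjugating automorphisms. -/
def AggrSet (Γ : SimpleGraph X) : Set (MulAut (RAAG Γ)) :=
  {φ | ∃ (x : X) (C : Set X), IsCompOf Γ ({x}ᶜ) C ∧
    (∀ y ∈ C, φ (gen Γ y) = (gen Γ x)⁻¹ * gen Γ y * gen Γ x) ∧
    (∀ y : X, y ∉ C → φ (gen Γ y) = gen Γ y)}

/-- Elementary singular conjugating automorphisms: those `α_{C,x^ε}` with `C` a singleton. -/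
def LInnSSet (Γ : SimpleGraph X) : Set (MulAut (RAAG Γ)) :=
  {φ | ∃ (x y : X) (ε : ℤ), (ε = 1 ∨ ε = -1) ∧
    IsCompOf Γ ((perp Γ {x})ᶜ) {y} ∧
    φ (gen Γ y) = (gen Γ x ^ ε)⁻¹ * gen Γ y * gen Γ x ^ ε ∧
    ∀ u : X, u ≠ y → φ (gen Γ u) = gen Γ u}

/-- Basic collected conjugating automorphisms. -/
def LInnCSet (Γ : SimpleGraph X) : Set (MulAut (RAAG Γ)) :=
  {φ | ∃ x u : X, Dominates Γ x u ∧
    (∀ v ∈ simClass Γ u \ {x}, φ (gen Γ v) = (gen Γ x)⁻¹ * gen Γ v * gen Γ x) ∧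
    (∀ v : X, v ∉ simClass Γ u \ {x} → φ (gen Γ v) = gen Γ v)}

/-- Regular elementary conjugating automorphisms. -/
def LInnRSet (Γ : SimpleGraph X) : Set (MulAut (RAAG Γ)) :=
  (LInnSet Γ ∩ {φ | IsConjV Γ φ}) \ LInnSSet Γ

/-- Basic vertex conjugating automorphisms. -/
def LInnVSet (Γ : SimpleGraph X) : Set (MulAut (RAAG Γ)) :=
  LInnRSet Γ ∪ LInnCSet Γ

/-- Tame extended elementary conjugating automorphisms. -/
def LInnTSet (Γ : SimpleGraph X) : Set (MulAut (RAAG Γ)) :=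
  {φ | ∃ (y : X) (L : Set X) (ε : ℤ), (ε = 1 ∨ ε = -1) ∧
    (∀ v ∈ L, ∃ C : Set X, IsCompOf Γ ((perp Γ {y})ᶜ) C ∧ v ∈ C ∧ C ⊆ L) ∧
    aSet Γ {y} ∩ L = ∅ ∧
    (∀ u ∈ L, φ (gen Γ u) = (gen Γ y ^ ε)⁻¹ * gen Γ u * gen Γ y ^ ε) ∧
    (∀ u : X, u ∉ L → φ (gen Γ u) = gen Γ u)}

/-- `K`-minimal vertices. -/
def KMin (Γ : SimpleGraph X) (x : X) : Prop :=
  ∀ y : X, aSet Γ {y} ⊆ aSet Γ {x} → aSet Γ {y} = aSet Γ {x}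

/-- `L`-minimal vertices. -/
def LMin (Γ : SimpleGraph X) (x : X) : Prop :=
  ∀ y : X, cl Γ {y} ⊆ cl Γ {x} → cl Γ {y} = cl Γ {x}

end PCG

namespace PCG

/-!
Write `lk x = x^⊥ \ {x}` for the link of `x`. Unfolding the definitions, `y ∈ 𝔞(x)` says
exactly that `lk x ⊆ y^⊥`, and since `x^⊥ = {x} ∪ lk x` and `⊥` turns unions into
intersections, `cl {x} = 𝔞(x) ∩ x^⊥`. Everything else is a short manipulation of these two
descriptions; the one genuinely combinatorial step is that `z ∈ 𝔞(x)` implies `𝔞(z) ⊆ 𝔞(x)`.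
-/

section Lemmas

variable {X : Type*} {Γ : SimpleGraph X}

lemma mem_perp_iff_subset_perp_singleton {u : X} {Y : Set X} :
    u ∈ perp Γ Y ↔ Y ⊆ perp Γ {u} := by
  simp only [perp, Set.subset_def, Set.mem_ofPred_eq, Set.mem_singleton_iff, forall_eq,
    eq_comm (a := u), Γ.adj_comm u]

lemma mem_perp_singleton {u x : X} : u ∈ perp Γ {x} ↔ u = x ∨ Γ.Adj u x := by
  simp [perp]

lemma mem_perp_singleton_comm {u x : X} : u ∈ perp Γ {x} ↔ x ∈ perp Γ {u} := by
  simp only [mem_perp_singleton, eq_comm (a := u), Γ.adj_comm u]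

lemma self_mem_perp_singleton (x : X) : x ∈ perp Γ {x} :=
  mem_perp_singleton.2 (Or.inl rfl)

lemma mem_perp_singleton_diff_self {w x : X} : w ∈ perp Γ {x} \ {x} ↔ Γ.Adj w x := by
  simp only [Set.mem_sdiff, mem_perp_singleton, Set.mem_singleton_iff]
  exact ⟨fun ⟨h, hne⟩ => h.resolve_left hne, fun h => ⟨Or.inr h, h.ne⟩⟩

lemma perp_union (A B : Set X) : perp Γ (A ∪ B) = perp Γ A ∩ perp Γ B := by
  ext u
  simp only [perp, Set.mem_union, Set.mem_inter_iff, Set.mem_ofPred_eq, or_imp, forall_and]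

lemma subset_perp_self_iff_isClique {S : Set X} : S ⊆ perp Γ S ↔ Γ.IsClique S := by
  simp only [Set.subset_def, perp, Set.mem_ofPred_eq, SimpleGraph.IsClique, Set.Pairwise,
    or_iff_not_imp_left]

lemma perp_singleton_subset_iff {x y : X} :
    perp Γ {x} ⊆ perp Γ {y} ↔ x ∈ perp Γ {y} ∧ perp Γ {x} \ {x} ⊆ perp Γ {y} := by
  rw [← Set.insert_subset_iff, Set.insert_sdiff_singleton,
    Set.insert_eq_of_mem (self_mem_perp_singleton x)]

lemma aSet_singleton (x : X) : aSet Γ {x} = perp Γ (perp Γ {x} \ {x}) := by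
  simp [aSet]

lemma aSet_eq_biInter_aSet_singleton (U : Set X) : aSet Γ U = ⋂ w ∈ U, aSet Γ {w} := by
  simp [aSet]

lemma mem_aSet_singleton {y x : X} : y ∈ aSet Γ {x} ↔ perp Γ {x} \ {x} ⊆ perp Γ {y} := by
  rw [aSet_singleton, mem_perp_iff_subset_perp_singleton]

lemma self_mem_aSet_singleton (x : X) : x ∈ aSet Γ {x} :=
  mem_aSet_singleton.2 Set.sdiff_subset

lemma cl_singleton_eq_aSet_inter_perp (x : X) : cl Γ {x} = aSet Γ {x} ∩ perp Γ {x} := by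
  rw [cl, aSet_singleton, ← perp_union,
    Set.sdiff_union_of_subset (Set.singleton_subset_iff.2 (self_mem_perp_singleton x))]

lemma aSet_singleton_eq_cl_iff (x : X) :
    aSet Γ {x} = cl Γ {x} ↔ aSet Γ {x} ⊆ perp Γ {x} := by
  rw [cl_singleton_eq_aSet_inter_perp, eq_comm, Set.inter_eq_left]

lemma perp_singleton_subset_aSet_iff_isClique (x : X) :
    perp Γ {x} ⊆ aSet Γ {x} ↔ Γ.IsClique (perp Γ {x}) := by
  rw [← subset_perp_self_iff_isClique, ← cl, cl_singleton_eq_aSet_inter_perp,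
    Set.subset_inter_iff, and_iff_left subset_rfl]

lemma aSet_singleton_subset_of_mem {x z : X} (hz : z ∈ aSet Γ {x}) :
    aSet Γ {z} ⊆ aSet Γ {x} := by
  intro u hu
  rw [mem_aSet_singleton] at hz hu ⊢
  intro v hv
  rw [mem_perp_singleton_diff_self] at hv
  rcases mem_perp_singleton.1 (hz (mem_perp_singleton_diff_self.2 hv)) with rfl | hvz
  · -- `v = z` is adjacent to `x`, so `x ∈ lk v ⊆ u^⊥`
    rcases mem_perp_singleton.1 (hu (mem_perp_singleton_diff_self.2 hv.symm)) with rfl | hxu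
    · exact mem_perp_singleton.2 (Or.inr hv)
    · exact mem_perp_singleton_comm.1 (hz (mem_perp_singleton_diff_self.2 hxu.symm))
  · exact hu (mem_perp_singleton_diff_self.2 hvz)

lemma aSet_singleton_subset_aSet_of_mem {U : Set X} {y : X} (hy : y ∈ aSet Γ U) :
    aSet Γ {y} ⊆ aSet Γ U := by
  rw [aSet_eq_biInter_aSet_singleton U] at hy ⊢
  exact Set.subset_iInter₂ fun w hw => aSet_singleton_subset_of_mem (Set.mem_iInter₂.1 hy w hw)

lemma aSet_singleton_subset_iff {x z : X} :
    aSet Γ {z} ⊆ aSet Γ {x} ↔ perp Γ {x} \ {x} ⊆ perp Γ {z} :=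
  ⟨fun h => mem_aSet_singleton.1 (h (self_mem_aSet_singleton z)),
    fun h => aSet_singleton_subset_of_mem (mem_aSet_singleton.2 h)⟩

lemma aSet_singleton_eq_iff {x z : X} :
    aSet Γ {x} = aSet Γ {z} ↔
      perp Γ {x} = perp Γ {z} ∨ perp Γ {x} \ {x} = perp Γ {z} \ {z} := by
  rw [Set.Subset.antisymm_iff, aSet_singleton_subset_iff, aSet_singleton_subset_iff]
  constructor
  · rintro ⟨hzx, hxz⟩
    by_cases hadj : Γ.Adj x z
    · left
      exact Set.Subset.antisymm
        (perp_singleton_subset_iff.2 ⟨mem_perp_singleton.2 (Or.inr hadj), hxz⟩)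
        (perp_singleton_subset_iff.2 ⟨mem_perp_singleton.2 (Or.inr hadj.symm), hzx⟩)
    · right
      exact Set.Subset.antisymm
        (Set.subset_sdiff_singleton hxz fun h => hadj (mem_perp_singleton_diff_self.1 h).symm)
        (Set.subset_sdiff_singleton hzx fun h => hadj (mem_perp_singleton_diff_self.1 h))
  · rintro (h | h) <;> exact ⟨h ▸ Set.sdiff_subset, h ▸ Set.sdiff_subset⟩

lemma aSet_eq_biUnion_aSet_singleton (U : Set X) :
    aSet Γ U = ⋃ y ∈ aSet Γ U, aSet Γ {y} :=
  Set.Subset.antisymm (fun u hu => Set.mem_biUnion hu (self_mem_aSet_singleton u))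
    (Set.iUnion₂_subset fun _ hy => aSet_singleton_subset_aSet_of_mem hy)

lemma cl_singleton_eq_aSet_of_mem {x y : X} (hx : cl Γ {x} = aSet Γ {x})
    (hy : y ∈ aSet Γ {x}) : cl Γ {y} = aSet Γ {y} := by
  have hxperp : aSet Γ {x} ⊆ perp Γ {x} := (aSet_singleton_eq_cl_iff x).1 hx.symm
  have hperp : perp Γ {x} ⊆ perp Γ {y} := perp_singleton_subset_iff.2
    ⟨mem_perp_singleton_comm.1 (hxperp hy), mem_aSet_singleton.1 hy⟩
  refine ((aSet_singleton_eq_cl_iff y).2 ?_).symm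
  exact (aSet_singleton_subset_of_mem hy).trans (hxperp.trans hperp)

end Lemmas

theorem aSet_cl_properties_general {X : Type*} (Γ : SimpleGraph X)
    (x z : X) (U : Set X) :
    (cl Γ {x} = aSet Γ {x} ∩ perp Γ {x} ∧
      (aSet Γ {x} = cl Γ {x} ↔ aSet Γ {x} ⊆ perp Γ {x})) ∧
    (perp Γ {x} ⊆ aSet Γ {x} ↔
      ∀ u ∈ perp Γ {x}, ∀ v ∈ perp Γ {x}, u ≠ v → Γ.Adj u v) ∧
    (aSet Γ {z} ⊆ aSet Γ {x} ↔ perp Γ {x} \ {x} ⊆ perp Γ {z}) ∧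
    (aSet Γ {x} = aSet Γ {z} ↔
      (perp Γ {x} = perp Γ {z} ∨ perp Γ {x} \ {x} = perp Γ {z} \ {z})) ∧
    (z ∈ aSet Γ {x} → aSet Γ {z} ⊆ aSet Γ {x}) ∧
    (aSet Γ U = ⋃ y ∈ aSet Γ U, aSet Γ {y}) ∧
    (cl Γ {x} = aSet Γ {x} → ∀ y ∈ aSet Γ {x}, cl Γ {y} = aSet Γ {y}) :=
  ⟨⟨cl_singleton_eq_aSet_inter_perp x, aSet_singleton_eq_cl_iff x⟩,
    perp_singleton_subset_aSet_iff_isClique x, aSet_singleton_subset_iff,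
    aSet_singleton_eq_iff, aSet_singleton_subset_of_mem, aSet_eq_biUnion_aSet_singleton U,
    fun hx _ hy => cl_singleton_eq_aSet_of_mem hx hy⟩

/-- Basic properties of the operators `cl` and `𝔞`. -/
theorem aSet_cl_properties {X : Type*} [Fintype X] (Γ : SimpleGraph X)
    (x z : X) (hxz : x ≠ z) (U : Set X) :
    (cl Γ {x} = aSet Γ {x} ∩ perp Γ {x} ∧
      (aSet Γ {x} = cl Γ {x} ↔ aSet Γ {x} ⊆ perp Γ {x})) ∧
    (perp Γ {x} ⊆ aSet Γ {x} ↔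
      ∀ u ∈ perp Γ {x}, ∀ v ∈ perp Γ {x}, u ≠ v → Γ.Adj u v) ∧
    (aSet Γ {z} ⊆ aSet Γ {x} ↔ perp Γ {x} \ {x} ⊆ perp Γ {z}) ∧
    (aSet Γ {x} = aSet Γ {z} ↔
      (perp Γ {x} = perp Γ {z} ∨ perp Γ {x} \ {x} = perp Γ {z} \ {z})) ∧
    (z ∈ aSet Γ {x} → aSet Γ {z} ⊆ aSet Γ {x}) ∧
    (aSet Γ U = ⋃ y ∈ aSet Γ U, aSet Γ {y}) ∧
    (cl Γ {x} = aSet Γ {x} → ∀ y ∈ aSet Γ {x}, cl Γ {y} = aSet Γ {y}) :=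
  aSet_cl_properties_general Γ x z U

end PCG
end

section
/- Let Γ be a finite simple graph with vertex set X and G = G(Γ). If x and z are adjacent vertices of Γ, then every element of G(𝔞(x)) commutes with every element of G(𝔞(z)); that is, [G(𝔞(x)), G(𝔞(z))] = 1. -/
theorem Subgroup.commute_of_mem_closure {G : Type*} [Group G] {S T : Set G}
    (hST : ∀ s ∈ S, ∀ t ∈ T, Commute s t) :
    ∀ g ∈ Subgroup.closure S, ∀ h ∈ Subgroup.closure T, Commute g h := by
  have : Subgroup.closure S ≤ Subgroup.centralizer (Subgroup.closure T) := by
    rw [Subgroup.centralizer_closure, Subgroup.closure_le]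
    exact fun s hs t ht => (hST s hs t ht).eq.symm
  exact fun g hg h hh => (Subgroup.mem_centralizer_iff.mp (this hg) h hh).symm

namespace PCG

section

variable {X : Type*}

theorem gen_commute_of_adj (Γ : SimpleGraph X) {a b : X} (h : Γ.Adj a b) :
    Commute (gen Γ a) (gen Γ b) :=
  commutatorElement_eq_one_iff_commute.mp (PresentedGroup.one_of_mem ⟨a, b, h, rfl⟩)

theorem perp_singleton_diff_self (Γ : SimpleGraph X) (x : X) :
    perp Γ {x} \ {x} = Γ.neighborSet x := by
  ext u
  simp only [perp, Set.mem_sdiff, Set.mem_ofPred_eq, Set.mem_singleton_iff, forall_eq,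
    SimpleGraph.mem_neighborSet]
  constructor
  · rintro ⟨hux | hux, hne⟩
    exacts [absurd hux hne, hux.symm]
  · intro hxu
    exact ⟨Or.inr hxu.symm, hxu.ne'⟩

theorem mem_aSet_singleton_s15 {Γ : SimpleGraph X} {x u : X} :
    u ∈ aSet Γ {x} ↔ ∀ w, Γ.Adj x w → u = w ∨ Γ.Adj u w := by
  simp only [aSet, Set.biInter_singleton, perp_singleton_diff_self]
  rfl

/- `𝔞(x)` lies in the star of every neighbour of `x`: apply this to `z`, and then to whichever of
`u`, `x` is a neighbour of `z`. -/
theorem eq_or_adj_of_mem_aSet_of_adj {Γ : SimpleGraph X} {x z u v : X} (hxz : Γ.Adj x z)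
    (hu : u ∈ aSet Γ {x}) (hv : v ∈ aSet Γ {z}) : u = v ∨ Γ.Adj u v := by
  rw [mem_aSet_singleton_s15] at hu hv
  rcases hu z hxz with rfl | huz
  · rcases hv x hxz.symm with rfl | hvx
    · exact Or.inr hxz.symm
    · exact hu v hvx.symm
  · rcases hv u huz.symm with rfl | hvu
    exacts [Or.inl rfl, Or.inr hvu.symm]

end

theorem parab_aSet_commute_general {X : Type*} (Γ : SimpleGraph X)
    (x z : X) (hadj : Γ.Adj x z) :
    ∀ g ∈ parab Γ (aSet Γ {x}), ∀ h ∈ parab Γ (aSet Γ {z}), Commute g h := by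
  refine Subgroup.commute_of_mem_closure ?_
  rintro _ ⟨u, hu, rfl⟩ _ ⟨v, hv, rfl⟩
  rcases eq_or_adj_of_mem_aSet_of_adj hadj hu hv with rfl | huv
  exacts [Commute.refl _, gen_commute_of_adj Γ huv]

/-- If `x` and `z` are adjacent then `[G(𝔞(x)), G(𝔞(z))] = 1`. -/
theorem parab_aSet_commute {X : Type*} [Fintype X] (Γ : SimpleGraph X)
    (x z : X) (hadj : Γ.Adj x z) :
    ∀ g ∈ parab Γ (aSet Γ {x}), ∀ h ∈ parab Γ (aSet Γ {z}), Commute g h :=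
  parab_aSet_commute_general Γ x z hadj

end PCG
end
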